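/- arXiv:2604.25445 — 4 statements merged into one kernel-verified Lean document; each statement's English description precedes it below -/
import Mathlib

section
/- Fix real numbers τ > 1, Y₀ > 0, k, λr, λc and α^r, α^c, and set λ = λr + i·λc. For each n ≥ 1 define vectors β_{j,n} = (β^r_{j,n}, β^c_{j,n}) ∈ ℝ² for 0 ≤ j ≤ n by the downward recursion: β_{n,n} = (α^r, α^c), and for 1 ≤ j ≤ n, β_{j-1,n} = ( I₂ + A/((j-1)(τ-1) + Y₀) ) · β_{j,n}, where A is the 2×2 real matrix with rows (λr−k, λc) and (−λc, λr−k). Then there exists a constant C > 0 (depending only on τ, Y₀, k, λ, α^r, α^c) such that for all n ≥ 1 and all 0 ≤ j ≤ n, both |β^r_{j,n}| ≤ C·((n+1)/(j+1))^{(λr−k)/(τ−1)} and |β^c_{j,n}| ≤ C·((n+1)/(j+1))^{(λr−k)/(τ−1)}. -/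
/-!
Read `(βʳ, βᶜ)` as a complex number: one step of the recursion multiplies it by
`1 + (a - i λc)/d` with `a = λr - k` and `d = (j-1)(τ-1) + Y₀`, so it multiplies `(βʳ)² + (βᶜ)²` by
`(1 + a/d)² + (λc/d)² ≤ exp (2a/d + |λ - k|²/d²)`. Since `1/d = (log (j+1) - log j)/(τ-1) + O(1/j²)`
and `∑ 1/j²` converges, the exponents summed over the steps from `n` down to `j` equal
`2a/(τ-1) · log ((n+1)/(j+1))` up to a bounded error.
-/

open Real Finset

lemma abs_inv_sub_log_add_one_sub_log_le {x : ℝ} (hx : 0 < x) :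
    |x⁻¹ - (log (x + 1) - log x)| ≤ (x ^ 2)⁻¹ := by
  have hx1 : 0 < x + 1 := by linarith
  rw [← log_div hx1.ne' hx.ne']
  have hq : 0 < (x + 1) / x := by positivity
  have upper : log ((x + 1) / x) ≤ x⁻¹ := by
    have := log_le_sub_one_of_pos hq
    rwa [show (x + 1) / x - 1 = x⁻¹ by field_simp; ring] at this
  have lower : (x + 1)⁻¹ ≤ log ((x + 1) / x) := by
    have := one_sub_inv_le_log_of_pos hq
    rwa [inv_div, show 1 - x / (x + 1) = (x + 1)⁻¹ by field_simp; ring] at this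
  have gap : x⁻¹ - (x + 1)⁻¹ ≤ (x ^ 2)⁻¹ := by
    rw [inv_sub_inv hx.ne' hx1.ne', add_sub_cancel_left, one_div]
    exact inv_anti₀ (by positivity) (by nlinarith)
  rw [abs_le]; constructor <;> nlinarith [inv_nonneg.2 (sq_nonneg x)]

lemma min_mul_le_affine {s Y x : ℝ} (hx : 1 ≤ x) :
    min Y s * x ≤ (x - 1) * s + Y := by
  have h1 : min Y s ≤ Y := min_le_left _ _
  have h2 : min Y s ≤ s := min_le_right _ _
  nlinarith

lemma abs_inv_affine_sub_log_le {s Y x : ℝ} (hs : 0 < s) (hY : 0 < Y) (hx : 1 ≤ x) :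
    |((x - 1) * s + Y)⁻¹ - (log (x + 1) - log x) / s|
      ≤ (1 + |s - Y| / min Y s) / s / x ^ 2 := by
  set c := min Y s
  set d := (x - 1) * s + Y
  have hx0 : 0 < x := by linarith
  have hc : 0 < c := lt_min hY hs
  have hcd : c * x ≤ d := min_mul_le_affine hx
  have hd : 0 < d := lt_of_lt_of_le (by positivity) hcd
  have split : d⁻¹ - (log (x + 1) - log x) / s
      = (s - Y) / (d * s * x) + (x⁻¹ - (log (x + 1) - log x)) / s := by
    field_simp; ring
  have shift : |(s - Y) / (d * s * x)| ≤ |s - Y| / c / s / x ^ 2 := by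
    rw [abs_div, abs_of_pos (by positivity : 0 < d * s * x),
      show |s - Y| / c / s / x ^ 2 = |s - Y| / (c * x * s * x) by ring]
    gcongr
  have log_err : |(x⁻¹ - (log (x + 1) - log x)) / s| ≤ 1 / s / x ^ 2 := by
    rw [abs_div, abs_of_pos hs, div_div, mul_comm, ← div_div, one_div]
    gcongr
    exact abs_inv_sub_log_add_one_sub_log_le hx0
  calc |d⁻¹ - (log (x + 1) - log x) / s|
      ≤ |(s - Y) / (d * s * x)| + |(x⁻¹ - (log (x + 1) - log x)) / s| := by
        rw [split]; exact abs_add_le _ _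
    _ ≤ |s - Y| / c / s / x ^ 2 + 1 / s / x ^ 2 := add_le_add shift log_err
    _ = (1 + |s - Y| / c) / s / x ^ 2 := by ring

lemma sum_Ico_inv_sq_le_two (j n : ℕ) : ∑ i ∈ Ico (j + 1) (n + 1), ((i : ℝ) ^ 2)⁻¹ ≤ 2 := by
  rw [Finset.Ico_add_one_left_eq_Ioo]
  refine (sum_Ioo_inv_sq_le j (n + 1)).trans ?_
  exact div_le_self zero_le_two (le_add_of_nonneg_left j.cast_nonneg)

lemma abs_sum_inv_affine_sub_log_le {s Y : ℝ} (hs : 0 < s) (hY : 0 < Y) {j n : ℕ}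
    (hjn : j ≤ n) :
    |∑ i ∈ Ico (j + 1) (n + 1), (((i : ℝ) - 1) * s + Y)⁻¹ - (log (n + 1) - log (j + 1)) / s|
      ≤ 2 * ((1 + |s - Y| / min Y s) / s) := by
  set M := (1 + |s - Y| / min Y s) / s
  have telescope : log ((n : ℝ) + 1) - log ((j : ℝ) + 1)
      = ∑ i ∈ Ico (j + 1) (n + 1), (log ((i : ℝ) + 1) - log i) := by
    have := sum_Ico_sub (fun i : ℕ => log (i : ℝ)) (show j + 1 ≤ n + 1 by omega)
    push_cast at this
    exact this.symm
  rw [telescope, sum_div, ← sum_sub_distrib]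
  calc _ ≤ ∑ i ∈ Ico (j + 1) (n + 1),
          |(((i : ℝ) - 1) * s + Y)⁻¹ - (log ((i : ℝ) + 1) - log i) / s| := abs_sum_le_sum_abs _ _
    _ ≤ ∑ i ∈ Ico (j + 1) (n + 1), M * ((i : ℝ) ^ 2)⁻¹ := by
        refine sum_le_sum fun i hi => ?_
        rw [← div_eq_mul_inv]
        have hi1 : (1 : ℝ) ≤ i := by exact_mod_cast (mem_Ico.1 hi).1.trans' (by omega)
        exact abs_inv_affine_sub_log_le hs hY hi1
    _ ≤ 2 * M := by
        rw [← mul_sum, mul_comm 2]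
        exact mul_le_mul_of_nonneg_left (sum_Ico_inv_sq_le_two j n) (by positivity)

lemma sum_inv_affine_sq_le {s Y : ℝ} (hs : 0 < s) (hY : 0 < Y) (j n : ℕ) :
    ∑ i ∈ Ico (j + 1) (n + 1), ((((i : ℝ) - 1) * s + Y) ^ 2)⁻¹ ≤ 2 / min Y s ^ 2 := by
  have hc : 0 < min Y s := lt_min hY hs
  calc _ ≤ ∑ i ∈ Ico (j + 1) (n + 1), (min Y s ^ 2)⁻¹ * ((i : ℝ) ^ 2)⁻¹ := by
        refine sum_le_sum fun i hi => ?_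
        have hi1 : (1 : ℝ) ≤ i := by exact_mod_cast (mem_Ico.1 hi).1.trans' (by omega)
        rw [← mul_inv, ← mul_pow]
        exact inv_anti₀ (by positivity) (pow_le_pow_left₀ (by positivity) (min_mul_le_affine hi1) 2)
    _ ≤ (min Y s ^ 2)⁻¹ * 2 := by
        rw [← mul_sum]
        exact mul_le_mul_of_nonneg_left (sum_Ico_inv_sq_le_two j n) (by positivity)
    _ = 2 / min Y s ^ 2 := by ring

noncomputable def stepExponent (a l d : ℝ) : ℝ := 2 * a * d⁻¹ + (a ^ 2 + l ^ 2) * (d ^ 2)⁻¹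

lemma rotation_scaling_sq_le_exp_mul (a l d r c : ℝ) :
    ((1 + a / d) * r + l / d * c) ^ 2 + (-(l / d) * r + (1 + a / d) * c) ^ 2
      ≤ exp (stepExponent a l d) * (r ^ 2 + c ^ 2) := by
  have expand : ((1 + a / d) * r + l / d * c) ^ 2 + (-(l / d) * r + (1 + a / d) * c) ^ 2
      = (stepExponent a l d + 1) * (r ^ 2 + c ^ 2) := by
    unfold stepExponent; ring
  rw [expand]
  gcongr
  exact add_one_le_exp _

lemma exists_sum_stepExponent_le {s Y : ℝ} (hs : 0 < s) (hY : 0 < Y) (a l : ℝ) :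
    ∃ K, ∀ j n : ℕ, j ≤ n →
      ∑ i ∈ Ico (j + 1) (n + 1), stepExponent a l (((i : ℝ) - 1) * s + Y)
        ≤ 2 * (a / s) * log ((n + 1) / (j + 1)) + K := by
  set M := (1 + |s - Y| / min Y s) / s
  refine ⟨2 * |a| * (2 * M) + (a ^ 2 + l ^ 2) * (2 / min Y s ^ 2), fun j n hjn => ?_⟩
  set X := ∑ i ∈ Ico (j + 1) (n + 1), (((i : ℝ) - 1) * s + Y)⁻¹
  set Λ := log (((n : ℝ) + 1) / ((j : ℝ) + 1)) / s
  have linear : a * X ≤ a * Λ + |a| * (2 * M) := by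
    have := abs_sum_inv_affine_sub_log_le hs hY hjn
    rw [← log_div (by positivity) (by positivity)] at this
    nlinarith [le_abs_self (a * (X - Λ)), abs_mul a (X - Λ), abs_nonneg a]
  have quadratic := mul_le_mul_of_nonneg_left (sum_inv_affine_sq_le hs hY j n)
    (by positivity : 0 ≤ a ^ 2 + l ^ 2)
  simp only [stepExponent, sum_add_distrib, ← mul_sum]
  have : 2 * (a / s) * log (((n : ℝ) + 1) / ((j : ℝ) + 1)) = 2 * (a * Λ) := by ring
  linarith

lemma le_exp_sum_mul_of_le_exp_mul {N g : ℕ → ℝ} {n : ℕ}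
    (step : ∀ i, 1 ≤ i → i ≤ n → N (i - 1) ≤ exp (g i) * N i) {j : ℕ} (hj : j ≤ n) :
    N j ≤ exp (∑ i ∈ Ico (j + 1) (n + 1), g i) * N n := by
  induction hj using Nat.decreasingInduction with
  | self => simp
  | of_succ j hjn ih =>
    rw [sum_eq_sum_Ico_succ_bot (by omega), exp_add, mul_assoc]
    exact (step (j + 1) (by omega) hjn).trans (mul_le_mul_of_nonneg_left ih (exp_nonneg _))

lemma abs_le_of_sq_add_sq_le {x y b : ℝ} (hb : 0 ≤ b) (h : x ^ 2 + y ^ 2 ≤ b ^ 2) :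
    |x| ≤ b ∧ |y| ≤ b :=
  ⟨abs_le_of_sq_le_sq (by nlinarith) hb, abs_le_of_sq_le_sq (by nlinarith) hb⟩

/-- For the downward recursion `β_{j-1,n} = (I₂ + A/((j-1)(τ-1)+Y₀)) β_{j,n}` with
`β_{n,n} = (αʳ, αᶜ)` and `A = [[λr−k, λc],[−λc, λr−k]]`, there is a constant `C > 0`
such that `|βʳ_{j,n}| ≤ C ((n+1)/(j+1))^{(λr−k)/(τ−1)}` and likewise for `βᶜ_{j,n}`,
for all `n ≥ 1` and `0 ≤ j ≤ n`. -/
theorem beta_recursion_bound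
    (τ Y₀ k lr lc αr αc : ℝ) (hτ : 1 < τ) (hY : 0 < Y₀)
    (β : ℕ → ℕ → ℝ × ℝ)
    (hβn : ∀ n : ℕ, 1 ≤ n → β n n = (αr, αc))
    (hrec : ∀ n j : ℕ, 1 ≤ j → j ≤ n →
      β n (j - 1) =
        ((1 + (lr - k) / (((j : ℝ) - 1) * (τ - 1) + Y₀)) * (β n j).1
            + (lc / (((j : ℝ) - 1) * (τ - 1) + Y₀)) * (β n j).2,
         (-(lc / (((j : ℝ) - 1) * (τ - 1) + Y₀))) * (β n j).1
            + (1 + (lr - k) / (((j : ℝ) - 1) * (τ - 1) + Y₀)) * (β n j).2)) :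
    ∃ C : ℝ, 0 < C ∧ ∀ n : ℕ, 1 ≤ n → ∀ j : ℕ, j ≤ n →
      |(β n j).1| ≤ C * (((n : ℝ) + 1) / ((j : ℝ) + 1)) ^ ((lr - k) / (τ - 1)) ∧
      |(β n j).2| ≤ C * (((n : ℝ) + 1) / ((j : ℝ) + 1)) ^ ((lr - k) / (τ - 1)) := by
  have hs : 0 < τ - 1 := by linarith
  obtain ⟨K, hK⟩ := exists_sum_stepExponent_le hs hY (lr - k) lc
  refine ⟨√((αr ^ 2 + αc ^ 2 + 1) * exp K), by positivity, fun n hn j hjn => ?_⟩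
  set R := ((n : ℝ) + 1) / ((j : ℝ) + 1)
  set q := (lr - k) / (τ - 1)
  have growth : (β n j).1 ^ 2 + (β n j).2 ^ 2
      ≤ exp (∑ i ∈ Ico (j + 1) (n + 1), stepExponent (lr - k) lc (((i : ℝ) - 1) * (τ - 1) + Y₀))
        * (αr ^ 2 + αc ^ 2) := by
    have := le_exp_sum_mul_of_le_exp_mul (N := fun i => (β n i).1 ^ 2 + (β n i).2 ^ 2)
      (fun i hi hin => by
        simp only [hrec n i hi hin]
        exact rotation_scaling_sq_le_exp_mul _ _ _ _ _) hjn
    simpa only [hβn n hn] using this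
  have power : exp (2 * q * log R + K) = (R ^ q) ^ 2 * exp K := by
    rw [rpow_def_of_pos (by positivity), ← exp_nat_mul, ← exp_add]
    ring_nf
  apply abs_le_of_sq_add_sq_le (by positivity)
  calc (β n j).1 ^ 2 + (β n j).2 ^ 2 ≤ exp (2 * q * log R + K) * (αr ^ 2 + αc ^ 2) :=
        growth.trans (by gcongr; exact hK j n hjn)
    _ ≤ (√((αr ^ 2 + αc ^ 2 + 1) * exp K) * R ^ q) ^ 2 := by
        rw [power, mul_pow, sq_sqrt (by positivity)]
        nlinarith [exp_pos K, sq_nonneg (R ^ q)]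
end

section
/- Let p₁, p₂, c₁, c₂, a₁, b₁, a₂, b₂ be real numbers with p₁ + p₂ < 1. For 1 ≤ j ≤ n define f_{j,n} = (n/(j+1))^{p₁} · ( a₁·cos(c₁·log(n/(j+1))) + b₁·sin(c₁·log(n/(j+1))) ) and g_{j,n} = (n/(j+1))^{p₂} · ( a₂·cos(c₂·log(n/(j+1))) + b₂·sin(c₂·log(n/(j+1))) ). Then the limit as n → ∞ of (1/n) · ∑_{j=1}^{n} f_{j,n} · g_{j,n} exists and equals the improper integral ∫₀¹ t^{−(p₁+p₂)} · ( a₁·cos(c₁·log t) − b₁·sin(c₁·log t) ) · ( a₂·cos(c₂·log t) − b₂·sin(c₂·log t) ) dt. -/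
/-!
Write `q = p₁ + p₂` and `x = (j + 1) / n`. Since `log (1 / x) = -log x`, the `j`-th summand is
`F x` for `F t = t ^ (-q) * G t`, where `G` is bounded and continuous on `(0, ∞)`, so the sum is a
Riemann sum of `F` over `(0, 1]`, sampled one cell to the right. It is the integral over `(0, 1)` of
the step function `t ↦ F ((⌊n t⌋ + 2) / n)`, which converges pointwise to `F` and is dominated by
`C (t ^ (-q) + 3 ^ (-q))`; this bound is integrable because `q < 1`, so dominated convergence applies.
-/

open Real MeasureTheory Set Filter

/-- On the cell `(k / n, (k + 1) / n)` this is `(k + 2) / n`, the sample point of the `j = k + 1`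
term of the Riemann sums `(1 / n) ∑_{j=1}^n F ((j + 1) / n)`. -/
noncomputable def riemannStep (n : ℕ) (t : ℝ) : ℝ := (⌊n * t⌋ + 2) / n

section RiemannStep

variable {n : ℕ}

theorem riemannStep_eqOn_Ioo (hn : 0 < n) (k : ℕ) :
    EqOn (riemannStep n) (fun _ => (k + 2) / n) (Ioo (k / n : ℝ) ((k + 1) / n)) := by
  intro t ht
  have hn' : (0 : ℝ) < n := Nat.cast_pos.2 hn
  have hfloor : ⌊n * t⌋ = k := by
    rw [Int.floor_eq_iff, Int.cast_natCast, ← div_le_iff₀' hn', ← lt_div_iff₀' hn']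
    exact ⟨ht.1.le, ht.2⟩
  simp [riemannStep, hfloor]

theorem self_le_riemannStep (hn : 0 < n) (t : ℝ) : t ≤ riemannStep n t := by
  rw [riemannStep, le_div_iff₀' (Nat.cast_pos.2 hn)]
  linarith [Int.lt_floor_add_one ((n : ℝ) * t)]

theorem riemannStep_le_add (hn : 0 < n) (t : ℝ) : riemannStep n t ≤ t + 2 / n := by
  have hn' : (0 : ℝ) < n := Nat.cast_pos.2 hn
  rw [riemannStep, div_le_iff₀ hn', add_mul, div_mul_cancel₀ _ hn'.ne']
  linarith [Int.floor_le ((n : ℝ) * t)]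

theorem tendsto_riemannStep (t : ℝ) : Tendsto (riemannStep · t) atTop (nhds t) := by
  have hupper : Tendsto (fun n : ℕ => t + 2 / (n : ℝ)) atTop (nhds t) := by
    simpa using tendsto_const_nhds.add (tendsto_const_div_atTop_nhds_zero_nat (2 : ℝ))
  refine tendsto_of_tendsto_of_tendsto_of_le_of_le' tendsto_const_nhds hupper ?_ ?_ <;>
    filter_upwards [eventually_gt_atTop 0] with n hn
  exacts [self_le_riemannStep hn t, riemannStep_le_add hn t]

theorem stronglyMeasurable_comp_riemannStep {β : Type*} [TopologicalSpace β] (F : ℝ → β)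
    (n : ℕ) : StronglyMeasurable fun t => F (riemannStep n t) :=
  (StronglyMeasurable.of_discrete (f := fun k : ℤ => F ((k + 2) / n))).comp_measurable
    (measurable_const.mul measurable_id).floor

end RiemannStep

theorem Real.rpow_le_rpow_add_rpow {t s b : ℝ} (ht : 0 < t) (hts : t ≤ s) (hsb : s ≤ b)
    (r : ℝ) : s ^ r ≤ t ^ r + b ^ r := by
  have hs : 0 < s := ht.trans_le hts
  rcases le_total 0 r with hr | hr
  · linarith [rpow_le_rpow hs.le hsb hr, rpow_nonneg ht.le r]
  · linarith [rpow_le_rpow_of_nonpos ht hts hr, rpow_nonneg (hs.le.trans hsb) r]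

section RiemannSum

variable {E : Type*} [NormedAddCommGroup E]

theorem norm_comp_riemannStep_le {F : ℝ → E} {q C : ℝ}
    (hFC : ∀ s > 0, ‖F s‖ ≤ C * s ^ (-q)) {n : ℕ} (hn : 0 < n) {t : ℝ}
    (ht : t ∈ Ioo (0 : ℝ) 1) : ‖F (riemannStep n t)‖ ≤ C * (t ^ (-q) + 3 ^ (-q)) := by
  have hC : 0 ≤ C := by simpa using (norm_nonneg _).trans (hFC 1 one_pos)
  have hlow := self_le_riemannStep hn t
  have hupp : riemannStep n t ≤ 3 := by
    have : (2 : ℝ) / n ≤ 2 := div_le_self zero_le_two (Nat.one_le_cast.2 hn)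
    linarith [riemannStep_le_add hn t, ht.2]
  calc ‖F (riemannStep n t)‖ ≤ C * riemannStep n t ^ (-q) := hFC _ (ht.1.trans_le hlow)
    _ ≤ C * (t ^ (-q) + 3 ^ (-q)) := by
      gcongr
      exact rpow_le_rpow_add_rpow ht.1 hlow hupp _

theorem intervalIntegrable_comp_riemannStep (F : ℝ → E) {n : ℕ} (hn : 0 < n) (k : ℕ) :
    IntervalIntegrable (fun t => F (riemannStep n t)) volume (k / n) ((k + 1) / n) := by
  rw [intervalIntegrable_iff_integrableOn_Ioo_of_le (by gcongr; linarith)]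
  exact (integrableOn_const (by simp)).congr_fun
    (fun t ht => congrArg F (riemannStep_eqOn_Ioo hn k ht).symm) measurableSet_Ioo

variable [NormedSpace ℝ E] [CompleteSpace E]

theorem intervalIntegral_comp_riemannStep (F : ℝ → E) {n : ℕ} (hn : 0 < n) (k : ℕ) :
    ∫ t in (k / n : ℝ)..((k + 1) / n), F (riemannStep n t) = (1 / n : ℝ) • F ((k + 2) / n) := by
  have hle : (k / n : ℝ) ≤ (k + 1) / n := by gcongr; linarith
  rw [intervalIntegral.integral_of_le hle, integral_Ioc_eq_integral_Ioo,
    setIntegral_congr_fun measurableSet_Ioo fun t ht => congrArg F (riemannStep_eqOn_Ioo hn k ht),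
    setIntegral_const, measureReal_def, Real.volume_Ioo, ENNReal.toReal_ofReal (sub_nonneg.2 hle)]
  congr 1
  field_simp
  ring

theorem integral_comp_riemannStep (F : ℝ → E) {n : ℕ} (hn : 0 < n) :
    ∫ t in Ioo (0 : ℝ) 1, F (riemannStep n t) =
      (1 / n : ℝ) • ∑ j ∈ Finset.Icc 1 n, F ((j + 1) / n) := by
  have hcells := intervalIntegral.sum_integral_adjacent_intervals (a := fun k : ℕ => (k / n : ℝ))
    (f := fun t => F (riemannStep n t)) (μ := volume) (n := n)
    fun k _ => by simpa using intervalIntegrable_comp_riemannStep F hn k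
  simp only [Nat.cast_zero, zero_div, Nat.cast_add, Nat.cast_one,
    div_self (Nat.cast_pos.2 hn : (0 : ℝ) < n).ne'] at hcells
  rw [← integral_Ioc_eq_integral_Ioo, ← intervalIntegral.integral_of_le zero_le_one, ← hcells,
    Finset.smul_sum, ← Finset.Ico_add_one_right_eq_Icc, Finset.sum_Ico_eq_sum_range,
    Nat.add_sub_cancel]
  refine Finset.sum_congr rfl fun k _ => ?_
  rw [intervalIntegral_comp_riemannStep F hn k]
  push_cast
  ring_nf

theorem tendsto_riemann_sum_of_norm_le_rpow {F : ℝ → E} {q C : ℝ} (hq : q < 1)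
    (hF : ContinuousOn F (Ioi 0)) (hFC : ∀ s > 0, ‖F s‖ ≤ C * s ^ (-q)) :
    IntegrableOn F (Ioo 0 1) ∧
      Tendsto (fun n : ℕ => (1 / n : ℝ) • ∑ j ∈ Finset.Icc 1 n, F ((j + 1) / n)) atTop
        (nhds (∫ t in Ioo (0 : ℝ) 1, F t)) := by
  have hrpow : IntegrableOn (fun t : ℝ => t ^ (-q)) (Ioo 0 1) :=
    (intervalIntegral.integrableOn_Ioo_rpow_iff zero_lt_one).2 (by linarith)
  have hint : IntegrableOn F (Ioo 0 1) :=
    (hrpow.const_mul C).mono' ((hF.mono Ioo_subset_Ioi_self).aestronglyMeasurable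
      measurableSet_Ioo) ((ae_restrict_iff' measurableSet_Ioo).2 (.of_forall fun t ht =>
        hFC t ht.1))
  refine ⟨hint, ?_⟩
  have hsteps := tendsto_integral_filter_of_dominated_convergence
    (μ := volume.restrict (Ioo (0 : ℝ) 1)) (F := fun n t => F (riemannStep n t))
    (fun t => C * (t ^ (-q) + 3 ^ (-q)))
    (.of_forall fun n => (stronglyMeasurable_comp_riemannStep F n).aestronglyMeasurable)
    (by
      filter_upwards [eventually_gt_atTop 0] with n hn
      exact (ae_restrict_iff' measurableSet_Ioo).2 (.of_forall fun t ht =>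
        norm_comp_riemannStep_le hFC hn ht))
    ((hrpow.add (integrableOn_const (by simp))).const_mul C)
    ((ae_restrict_iff' measurableSet_Ioo).2 (.of_forall fun t ht =>
      (hF.continuousAt (Ioi_mem_nhds ht.1)).tendsto.comp (tendsto_riemannStep t)))
  refine hsteps.congr' ?_
  filter_upwards [eventually_gt_atTop 0] with n hn
  exact integral_comp_riemannStep F hn

end RiemannSum

theorem abs_mul_cos_sub_mul_sin_le (a b x : ℝ) : |a * cos x - b * sin x| ≤ |a| + |b| :=
  calc |a * cos x - b * sin x| ≤ |a| * |cos x| + |b| * |sin x| := by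
        simpa only [abs_mul] using abs_sub (a * cos x) (b * sin x)
    _ ≤ |a| * 1 + |b| * 1 := by gcongr <;> simp only [abs_cos_le_one, abs_sin_le_one]
    _ = |a| + |b| := by ring

theorem inv_rpow_mul_cos_add_sin_log_inv {x : ℝ} (hx : 0 < x) (p a b c : ℝ) :
    x⁻¹ ^ p * (a * cos (c * log x⁻¹) + b * sin (c * log x⁻¹)) =
      x ^ (-p) * (a * cos (c * log x) - b * sin (c * log x)) := by
  rw [inv_rpow hx.le, ← rpow_neg hx.le, log_inv, mul_neg, cos_neg, sin_neg]
  ring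

/-- Riemann-sum-to-integral limit: with `p₁ + p₂ < 1`, the normalized sums
`(1/n) ∑_{j=1}^n f_{j,n} g_{j,n}` converge to the (convergent) improper integral
`∫₀¹ t^{−(p₁+p₂)} (a₁ cos(c₁ log t) − b₁ sin(c₁ log t)) (a₂ cos(c₂ log t) − b₂ sin(c₂ log t)) dt`. -/
theorem tendsto_riemann_sum_to_integral
    (p₁ p₂ c₁ c₂ a₁ b₁ a₂ b₂ : ℝ) (hp : p₁ + p₂ < 1) :
    IntegrableOn
      (fun t : ℝ => t ^ (-(p₁ + p₂)) *
        ((a₁ * Real.cos (c₁ * Real.log t) - b₁ * Real.sin (c₁ * Real.log t)) *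
         (a₂ * Real.cos (c₂ * Real.log t) - b₂ * Real.sin (c₂ * Real.log t))))
      (Set.Ioo 0 1) volume ∧
    Tendsto
      (fun n : ℕ =>
        (1 / (n : ℝ)) * ∑ j ∈ Finset.Icc 1 n,
          (((n : ℝ) / ((j : ℝ) + 1)) ^ p₁ *
              (a₁ * Real.cos (c₁ * Real.log ((n : ℝ) / ((j : ℝ) + 1))) +
               b₁ * Real.sin (c₁ * Real.log ((n : ℝ) / ((j : ℝ) + 1)))) *
           (((n : ℝ) / ((j : ℝ) + 1)) ^ p₂ *
              (a₂ * Real.cos (c₂ * Real.log ((n : ℝ) / ((j : ℝ) + 1))) +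
               b₂ * Real.sin (c₂ * Real.log ((n : ℝ) / ((j : ℝ) + 1)))))))
      atTop
      (nhds (∫ t in Set.Ioo (0 : ℝ) 1, t ^ (-(p₁ + p₂)) *
        ((a₁ * Real.cos (c₁ * Real.log t) - b₁ * Real.sin (c₁ * Real.log t)) *
         (a₂ * Real.cos (c₂ * Real.log t) - b₂ * Real.sin (c₂ * Real.log t))))) := by
  set F : ℝ → ℝ := fun t => t ^ (-(p₁ + p₂)) *
    ((a₁ * cos (c₁ * log t) - b₁ * sin (c₁ * log t)) *
     (a₂ * cos (c₂ * log t) - b₂ * sin (c₂ * log t))) with hF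
  have hcont : ContinuousOn F (Ioi 0) := by
    have hne : ∀ t ∈ Ioi (0 : ℝ), t ≠ 0 := fun t ht => ht.ne'
    fun_prop (disch := assumption)
  have hbound : ∀ s > 0, ‖F s‖ ≤ (|a₁| + |b₁|) * (|a₂| + |b₂|) * s ^ (-(p₁ + p₂)) := by
    intro s hs
    rw [hF, norm_mul, norm_of_nonneg (rpow_nonneg hs.le _), mul_comm, norm_mul]
    gcongr <;> exact abs_mul_cos_sub_mul_sin_le ..
  obtain ⟨hint, hlim⟩ := tendsto_riemann_sum_of_norm_le_rpow hp hcont hbound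
  refine ⟨hint, hlim.congr fun n => ?_⟩
  rw [smul_eq_mul]
  congr 1
  refine Finset.sum_congr rfl fun j hj => ?_
  obtain ⟨hj1, hjn⟩ := Finset.mem_Icc.1 hj
  have hx : 0 < ((j : ℝ) + 1) / n := div_pos (by positivity) (Nat.cast_pos.2 (hj1.trans hjn))
  simp only [hF]
  rw [← inv_div ((j : ℝ) + 1) n, inv_rpow_mul_cos_add_sin_log_inv hx,
    inv_rpow_mul_cos_add_sin_log_inv hx, neg_add, rpow_add hx]
  ring
end

section
/- Let {X_{n,j} : n ≥ 1, 1 ≤ j ≤ n} be a triangular array of square-integrable real random variables on a probability space. Suppose that the sequence of random variables T_n := ∑_{j=1}^{n} X_{n,j}² is uniformly integrable, and that max_{1≤j≤n} |X_{n,j}| → 0 in probability as n → ∞. Then the unconditional Lindeberg condition holds: for every ε > 0, ∑_{j=1}^{n} E[ X_{n,j}² · 1{|X_{n,j}| > ε} ] → 0 as n → ∞. -/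
/-!
The Lindeberg sum for level `ε` is dominated by `∫_{A_n} T_n`, where `A_n` is the event that
some `|X_{n,j}|` exceeds `ε`. Splitting according to whether `T_n` exceeds a level `L` gives
`∫_{A_n} T_n ≤ sup_m ∫_{T_m > L} T_m + L · P(A_n)`: the first term is small by uniform
integrability, uniformly in `n`, and the second tends to `0` because `P(A_n) → 0`.
-/

open MeasureTheory Filter

section

variable {Ω : Type*} {m0 : MeasurableSpace Ω} {μ : Measure Ω}

theorem sum_setIntegral_le_setIntegral_biUnion_sum {ι : Type*} {s : Finset ι} {t : ι → Set Ω}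
    {g : ι → Ω → ℝ} (hg : ∀ i ∈ s, Integrable (g i) μ) (hg0 : ∀ i ∈ s, 0 ≤ g i) :
    ∑ i ∈ s, ∫ ω in t i, g i ω ∂μ ≤ ∫ ω in ⋃ i ∈ s, t i, ∑ i ∈ s, g i ω ∂μ := by
  rw [integral_finsetSum s fun i hi => (hg i hi).integrableOn]
  exact Finset.sum_le_sum fun i hi => setIntegral_mono_set (hg i hi).integrableOn
    (ae_of_all _ (hg0 i hi)) (Set.subset_biUnion_of_mem hi).eventuallyLE

theorem setIntegral_le_setIntegral_abs_gt_add_mul_measureReal [IsFiniteMeasure μ]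
    {f : Ω → ℝ} (hf : Integrable f μ) (s : Set Ω) (L : ℝ) :
    ∫ ω in s, f ω ∂μ ≤ ∫ ω in {ω | L < |f ω|}, |f ω| ∂μ + max L 0 * μ.real s := by
  set B := {ω | L < |f ω|}
  have hB : NullMeasurableSet B μ :=
    nullMeasurableSet_lt aemeasurable_const hf.1.aemeasurable.abs
  have hBf : Integrable (B.indicator fun ω => |f ω|) μ := hf.abs.indicator₀ hB
  have hle : ∀ ω, f ω ≤ B.indicator (fun ω => |f ω|) ω + max L 0 := by
    intro ω
    by_cases hω : ω ∈ B
    · rw [Set.indicator_of_mem hω]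
      linarith [le_abs_self (f ω), le_max_right L 0]
    · rw [Set.indicator_of_notMem hω]
      linarith [le_abs_self (f ω), le_max_left L 0, not_lt.mp (show ¬L < |f ω| from hω)]
  calc ∫ ω in s, f ω ∂μ
      ≤ ∫ ω in s, (B.indicator (fun ω => |f ω|) ω + max L 0) ∂μ :=
        setIntegral_mono hf.integrableOn
          (hBf.integrableOn.add (integrable_const _).integrableOn) hle
    _ = ∫ ω in s, B.indicator (fun ω => |f ω|) ω ∂μ + max L 0 * μ.real s := by
        rw [integral_add hBf.integrableOn (integrable_const _).integrableOn, setIntegral_const,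
          smul_eq_mul, mul_comm]
    _ ≤ ∫ ω, B.indicator (fun ω => |f ω|) ω ∂μ + max L 0 * μ.real s := by
        grw [setIntegral_le_integral hBf
          (ae_of_all _ fun ω => Set.indicator_nonneg (fun ω _ => abs_nonneg (f ω)) ω)]
    _ = ∫ ω in B, |f ω| ∂μ + max L 0 * μ.real s := by
        rw [integral_indicator₀ hB]

theorem tendsto_setIntegral_zero_of_uniformIntegrable [IsFiniteMeasure μ] {ι : Type*}
    {l : Filter ι} {f : ι → Ω → ℝ} {A : ι → Set Ω} (hf : ∀ n, Integrable (f n) μ)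
    (hf0 : ∀ n, 0 ≤ f n)
    (hUI : ∀ δ : ℝ, 0 < δ → ∃ L : ℝ, ∀ n, ∫ ω in {ω | L < |f n ω|}, |f n ω| ∂μ ≤ δ)
    (hA : Tendsto (fun n => μ (A n)) l (nhds 0)) :
    Tendsto (fun n => ∫ ω in A n, f n ω ∂μ) l (nhds 0) := by
  have hA' : Tendsto (fun n => μ.real (A n)) l (nhds 0) :=
    (ENNReal.tendsto_toReal ENNReal.zero_ne_top).comp hA
  refine tendsto_order.2 ⟨fun a ha => Eventually.of_forall fun n =>
      ha.trans_le (integral_nonneg (hf0 n)), fun a ha => ?_⟩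
  obtain ⟨L, hL⟩ := hUI (a / 2) (half_pos ha)
  have hsmall : ∀ᶠ n in l, max L 0 * μ.real (A n) < a / 2 := by
    refine (hA'.const_mul (max L 0)).eventually (gt_mem_nhds ?_)
    rw [mul_zero]
    exact half_pos ha
  filter_upwards [hsmall] with n hn
  linarith [setIntegral_le_setIntegral_abs_gt_add_mul_measureReal (hf n) (A n) L, hL n]

end

/-- If the row sums of squares `T_n = ∑_{j=1}^n X_{n,j}²` of a triangular array of
square-integrable random variables are uniformly integrable, and
`max_{1≤j≤n} |X_{n,j}| → 0` in probability, then the unconditional Lindeberg condition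
holds: for every `ε > 0`, `∑_{j=1}^n E[X_{n,j}² 1{|X_{n,j}| > ε}] → 0`. -/
theorem lindeberg_of_uniformIntegrable_max_to_zero
    {Ω : Type*} {m0 : MeasurableSpace Ω} (μ : Measure Ω) [IsProbabilityMeasure μ]
    (X : ℕ → ℕ → Ω → ℝ)
    (hL2 : ∀ n j, MemLp (X n j) 2 μ)
    (hUI : ∀ δ : ℝ, 0 < δ → ∃ L : ℝ, ∀ n : ℕ,
      ∫ ω in {ω | L < |∑ j ∈ Finset.Icc 1 n, (X n j ω) ^ 2|},
        |∑ j ∈ Finset.Icc 1 n, (X n j ω) ^ 2| ∂μ ≤ δ)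
    (hmax : ∀ ε : ℝ, 0 < ε →
      Tendsto (fun n : ℕ => μ {ω | ∃ j ∈ Finset.Icc 1 n, ε < |X n j ω|})
        atTop (nhds 0)) :
    ∀ ε : ℝ, 0 < ε →
      Tendsto
        (fun n : ℕ => ∑ j ∈ Finset.Icc 1 n,
          ∫ ω in {ω | ε < |X n j ω|}, (X n j ω) ^ 2 ∂μ)
        atTop (nhds 0) := by
  intro ε hε
  have hsq : ∀ n j, Integrable (fun ω => X n j ω ^ 2) μ := fun n j => (hL2 n j).integrable_sq
  have hT : Tendsto (fun n => ∫ ω in {ω | ∃ j ∈ Finset.Icc 1 n, ε < |X n j ω|},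
      ∑ j ∈ Finset.Icc 1 n, X n j ω ^ 2 ∂μ) atTop (nhds 0) :=
    tendsto_setIntegral_zero_of_uniformIntegrable
      (fun n => integrable_finsetSum _ fun j _ => hsq n j)
      (fun n ω => Finset.sum_nonneg fun j _ => sq_nonneg _) hUI (hmax ε hε)
  refine squeeze_zero (fun n => Finset.sum_nonneg fun j _ => integral_nonneg fun ω => sq_nonneg _)
    (fun n => ?_) hT
  have hA : {ω | ∃ j ∈ Finset.Icc 1 n, ε < |X n j ω|} =
      ⋃ j ∈ Finset.Icc 1 n, {ω | ε < |X n j ω|} := by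
    ext ω
    simp
  rw [hA]
  exact sum_setIntegral_le_setIntegral_biUnion_sum (fun j _ => hsq n j)
    (fun j _ ω => sq_nonneg _)
end

section
/- Let θ ∈ ℝ and let (W_j)_{j≥1} be integrable real random variables on a probability space with E[|W_j − θ|] → 0 as j → ∞. Let p₁, p₂ be real numbers with p₁ + p₂ < 1 and let K > 0. For each n ≥ 1 let b^{(1)}_{j,n} and b^{(2)}_{j,n} (1 ≤ j ≤ n) be real numbers with |b^{(1)}_{j,n}| ≤ K·(n/(j+1))^{p₁} and |b^{(2)}_{j,n}| ≤ K·(n/(j+1))^{p₂}. Then E[ | (1/n) · ∑_{j=1}^{n} b^{(1)}_{j,n} · b^{(2)}_{j,n} · (W_j − θ) | ] → 0 as n → ∞. -/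
/-!
Since `|b⁽¹⁾_{j,n} b⁽²⁾_{j,n}| ≤ K² (n/(j+1))^{p₁+p₂}`, the triangle inequality bounds the
expectation by `∑_{j ≤ n} K² a_{n,j} e_j` with `e_j = E|W_j − θ| → 0` and
`a_{n,j} = (1/n) (n/(j+1))^{p₁+p₂}`. This tends to zero by a Toeplitz-type argument: the rows of
`a` have bounded sums (a Riemann sum of `x^{-(p₁+p₂)}` on `(0, 1]`, integrable since
`p₁ + p₂ < 1`) and every column tends to zero (like `n^{p₁+p₂-1}`).
-/

open MeasureTheory Filter Topology Finset

theorem tendsto_sum_mul_of_tendsto_zero {s : ℕ → Finset ℕ} {a : ℕ → ℕ → ℝ} {e : ℕ → ℝ} {C : ℝ}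
    (ha : ∀ n j, 0 ≤ a n j) (hsum : ∀ n, ∑ j ∈ s n, a n j ≤ C)
    (hcol : ∀ j, Tendsto (fun n => a n j) atTop (𝓝 0)) (he : Tendsto e atTop (𝓝 0)) :
    Tendsto (fun n => ∑ j ∈ s n, a n j * e j) atTop (𝓝 0) := by
  have hC : 0 ≤ C := (sum_nonneg fun j _ => ha 0 j).trans (hsum 0)
  refine squeeze_zero_norm (a := fun n => ∑ j ∈ s n, a n j * |e j|) (fun n => ?_) ?_
  · refine (norm_sum_le _ _).trans_eq (sum_congr rfl fun j _ => ?_)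
    rw [Real.norm_eq_abs, abs_mul, abs_of_nonneg (ha n j)]
  refine tendsto_order.2 ⟨fun b hb => .of_forall fun n =>
    hb.trans_le (sum_nonneg fun j _ => mul_nonneg (ha n j) (abs_nonneg _)), fun ε hε => ?_⟩
  set δ := ε / (2 * (C + 1))
  have hδ : δ * C < ε / 2 := by
    rw [div_mul_eq_mul_div, div_lt_div_iff₀ (by positivity) two_pos]
    nlinarith
  obtain ⟨m, hm⟩ := eventually_atTop.1 <|
    (he.abs.eventually (ge_mem_nhds (by rw [abs_zero]; positivity : |(0 : ℝ)| < δ)))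
  -- Columns `j < m` are handled by `hcol`, the others by `|e j| ≤ δ` and the row-sum bound.
  have hsplit : ∀ n, ∑ j ∈ s n, a n j * |e j| ≤ ∑ j ∈ range m, a n j * |e j| + δ * C := by
    intro n
    rw [← sum_filter_add_sum_filter_not (s n) (· < m)]
    refine add_le_add ?_ ?_
    · exact sum_le_sum_of_subset_of_nonneg (fun j hj => by simpa using (mem_filter.1 hj).2)
        fun j _ _ => mul_nonneg (ha n j) (abs_nonneg _)
    · calc ∑ j ∈ (s n).filter (¬· < m), a n j * |e j|
          ≤ ∑ j ∈ (s n).filter (¬· < m), a n j * δ :=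
            sum_le_sum fun j hj => mul_le_mul_of_nonneg_left
              (hm j (not_lt.1 (mem_filter.1 hj).2)) (ha n j)
        _ ≤ ∑ j ∈ s n, a n j * δ :=
            sum_le_sum_of_subset_of_nonneg (filter_subset _ _) fun j _ _ => by
              have := ha n j; positivity
        _ ≤ δ * C := by rw [← sum_mul, mul_comm]; gcongr; exact hsum n
  have hhead : Tendsto (fun n => ∑ j ∈ range m, a n j * |e j|) atTop (𝓝 0) := by
    simpa using tendsto_finsetSum (range m) fun j _ => (hcol j).mul_const |e j|
  filter_upwards [hhead.eventually (gt_mem_nhds (half_pos hε))] with n hn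
  linarith [hsplit n]

theorem sum_range_rpow_neg_le {p : ℝ} (hp : p < 1) (n : ℕ) :
    ∑ k ∈ range n, ((k : ℝ) + 2) ^ (-p) ≤ ((n : ℝ) + 2) ^ (1 - p) / (1 - p) := by
  have hintegral : ∀ a b : ℝ, 0 ≤ a → ∫ x in a..b, x ^ (-p) ≤ b ^ (1 - p) / (1 - p) := by
    intro a b ha
    rw [integral_rpow (Or.inl (by linarith)), neg_add_eq_sub]
    have : 0 ≤ a ^ (1 - p) := Real.rpow_nonneg ha _
    gcongr
    linarith
  rcases le_total p 0 with hp0 | hp0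
  · have hmono : MonotoneOn (fun x : ℝ => x ^ (-p)) (Set.Icc 2 (2 + n)) :=
      fun x hx y _ hxy => Real.rpow_le_rpow (by linarith [hx.1]) hxy (by linarith)
    calc ∑ k ∈ range n, ((k : ℝ) + 2) ^ (-p) = ∑ k ∈ range n, (2 + (k : ℝ)) ^ (-p) := by
          simp_rw [add_comm]
      _ ≤ ∫ x in 2..2 + (n : ℝ), x ^ (-p) := hmono.sum_le_integral
      _ ≤ _ := by rw [add_comm (2 : ℝ)]; exact hintegral _ _ zero_le_two
  · have hanti : AntitoneOn (fun x : ℝ => x ^ (-p)) (Set.Icc 1 (1 + n)) :=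
      fun x hx y _ hxy => Real.rpow_le_rpow_of_nonpos (by linarith [hx.1]) hxy (by linarith)
    calc ∑ k ∈ range n, ((k : ℝ) + 2) ^ (-p) = ∑ k ∈ range n, (1 + ((k + 1 : ℕ) : ℝ)) ^ (-p) := by
          push_cast; ring_nf
      _ ≤ ∫ x in 1..1 + (n : ℝ), x ^ (-p) := hanti.sum_le_integral
      _ ≤ (1 + (n : ℝ)) ^ (1 - p) / (1 - p) := hintegral _ _ zero_le_one
      _ ≤ _ := by
          have : 0 < 1 - p := by linarith
          gcongr ?_ ^ _ / _
          linarith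

noncomputable def powerWeight (p : ℝ) (n j : ℕ) : ℝ :=
  1 / (n : ℝ) * ((n : ℝ) / ((j : ℝ) + 1)) ^ p

theorem powerWeight_nonneg (p : ℝ) (n j : ℕ) : 0 ≤ powerWeight p n j := by
  unfold powerWeight; positivity

theorem powerWeight_eq {p : ℝ} {n : ℕ} (hn : 0 < n) (j : ℕ) :
    powerWeight p n j = (n : ℝ) ^ (p - 1) * ((j : ℝ) + 1) ^ (-p) := by
  have hn' : (0 : ℝ) < n := Nat.cast_pos.2 hn
  rw [powerWeight, Real.div_rpow hn'.le (by positivity), Real.rpow_sub hn', Real.rpow_one,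
    Real.rpow_neg (by positivity)]
  ring

theorem tendsto_powerWeight_atTop {p : ℝ} (hp : p < 1) (j : ℕ) :
    Tendsto (fun n => powerWeight p n j) atTop (𝓝 0) := by
  have hpow : Tendsto (fun n : ℕ => (n : ℝ) ^ (p - 1)) atTop (𝓝 0) := by
    simpa [neg_sub, Function.comp_def] using
      (tendsto_rpow_neg_atTop (sub_pos.2 hp)).comp tendsto_natCast_atTop_atTop
  refine (zero_mul (((j : ℝ) + 1) ^ (-p)) ▸ hpow.mul_const (((j : ℝ) + 1) ^ (-p))).congr' ?_
  filter_upwards [eventually_gt_atTop 0] with n hn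
  exact (powerWeight_eq hn j).symm

theorem sum_powerWeight_le {p : ℝ} (hp : p < 1) (n : ℕ) :
    ∑ j ∈ Icc 1 n, powerWeight p n j ≤ 3 ^ (1 - p) / (1 - p) := by
  rcases n.eq_zero_or_pos with rfl | hn
  · simpa using div_nonneg (Real.rpow_nonneg zero_le_three _) (sub_pos.2 hp).le
  have hn' : (0 : ℝ) < n := Nat.cast_pos.2 hn
  have hreindex : ∑ j ∈ Icc 1 n, ((j : ℝ) + 1) ^ (-p) = ∑ k ∈ range n, ((k : ℝ) + 2) ^ (-p) := by
    rw [← Ico_add_one_right_eq_Icc, sum_Ico_eq_sum_range]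
    push_cast; ring_nf
  calc ∑ j ∈ Icc 1 n, powerWeight p n j
      = (n : ℝ) ^ (p - 1) * ∑ k ∈ range n, ((k : ℝ) + 2) ^ (-p) := by
        rw [sum_congr rfl fun j _ => powerWeight_eq hn j, ← mul_sum, hreindex]
    _ ≤ (n : ℝ) ^ (p - 1) * (((n : ℝ) + 2) ^ (1 - p) / (1 - p)) := by
        gcongr; exact sum_range_rpow_neg_le hp n
    _ = (((n : ℝ) + 2) / n) ^ (1 - p) / (1 - p) := by
        rw [Real.div_rpow (by positivity) hn'.le, show p - 1 = -(1 - p) by ring,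
          Real.rpow_neg hn'.le]
        ring
    _ ≤ 3 ^ (1 - p) / (1 - p) := by
        have : 0 < 1 - p := sub_pos.2 hp
        gcongr
        rw [div_le_iff₀ hn']
        linarith [(Nat.one_le_cast (α := ℝ)).2 hn]

theorem abs_mul_le_powerWeight {p₁ p₂ K x y : ℝ} {n j : ℕ} (hn : 0 < n)
    (hx : |x| ≤ K * ((n : ℝ) / ((j : ℝ) + 1)) ^ p₁)
    (hy : |y| ≤ K * ((n : ℝ) / ((j : ℝ) + 1)) ^ p₂) :
    |1 / (n : ℝ) * x * y| ≤ K ^ 2 * powerWeight (p₁ + p₂) n j := by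
  have hbase : (0 : ℝ) < (n : ℝ) / ((j : ℝ) + 1) := by
    have : (0 : ℝ) < n := Nat.cast_pos.2 hn
    positivity
  rw [mul_assoc, abs_mul, abs_of_nonneg (by positivity), abs_mul, powerWeight,
    Real.rpow_add hbase]
  calc 1 / (n : ℝ) * (|x| * |y|)
      ≤ 1 / (n : ℝ) * ((K * ((n : ℝ) / ((j : ℝ) + 1)) ^ p₁) *
          (K * ((n : ℝ) / ((j : ℝ) + 1)) ^ p₂)) := by
        gcongr
        exact (abs_nonneg x).trans hx
    _ = _ := by ring

theorem integral_abs_sum_mul_le {ι Ω : Type*} {m : MeasurableSpace Ω} {μ : Measure Ω}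
    (s : Finset ι) (c : ι → ℝ) {f : ι → Ω → ℝ} (hf : ∀ i ∈ s, Integrable (f i) μ) :
    ∫ ω, |∑ i ∈ s, c i * f i ω| ∂μ ≤ ∑ i ∈ s, |c i| * ∫ ω, |f i ω| ∂μ := by
  have hf' : ∀ i ∈ s, Integrable (fun ω => |c i| * |f i ω|) μ :=
    fun i hi => ((hf i hi).abs).const_mul _
  calc ∫ ω, |∑ i ∈ s, c i * f i ω| ∂μ ≤ ∫ ω, ∑ i ∈ s, |c i| * |f i ω| ∂μ := by
        refine integral_mono (integrable_finsetSum s fun i hi => ((hf i hi).const_mul _)).abs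
          (integrable_finsetSum s hf') fun ω => ?_
        simpa only [abs_mul] using abs_sum_le_sum_abs (fun i => c i * f i ω) s
    _ = ∑ i ∈ s, |c i| * ∫ ω, |f i ω| ∂μ := by
        rw [integral_finsetSum s hf']
        simp_rw [integral_const_mul]

theorem weighted_cesaro_L1_convergence_general
    {Ω : Type*} {m0 : MeasurableSpace Ω} (μ : Measure Ω) [IsProbabilityMeasure μ]
    (θ : ℝ) (W : ℕ → Ω → ℝ) (hint : ∀ j, Integrable (W j) μ)
    (hconv : Tendsto (fun j : ℕ => ∫ ω, |W j ω - θ| ∂μ) atTop (nhds 0))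
    (p₁ p₂ : ℝ) (hp : p₁ + p₂ < 1) (K : ℝ)
    (b₁ b₂ : ℕ → ℕ → ℝ)
    (hb₁ : ∀ n j : ℕ, 1 ≤ j → j ≤ n → |b₁ n j| ≤ K * ((n : ℝ) / ((j : ℝ) + 1)) ^ p₁)
    (hb₂ : ∀ n j : ℕ, 1 ≤ j → j ≤ n → |b₂ n j| ≤ K * ((n : ℝ) / ((j : ℝ) + 1)) ^ p₂) :
    Tendsto
      (fun n : ℕ =>
        ∫ ω, |(1 / (n : ℝ)) * ∑ j ∈ Finset.Icc 1 n, b₁ n j * b₂ n j * (W j ω - θ)| ∂μ)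
      atTop (nhds 0) := by
  set e := fun j => ∫ ω, |W j ω - θ| ∂μ
  have hbound : ∀ n : ℕ,
      ∫ ω, |(1 / (n : ℝ)) * ∑ j ∈ Icc 1 n, b₁ n j * b₂ n j * (W j ω - θ)| ∂μ ≤
        ∑ j ∈ Icc 1 n, K ^ 2 * powerWeight (p₁ + p₂) n j * e j := fun n =>
    calc ∫ ω, |(1 / (n : ℝ)) * ∑ j ∈ Icc 1 n, b₁ n j * b₂ n j * (W j ω - θ)| ∂μ
        = ∫ ω, |∑ j ∈ Icc 1 n, 1 / (n : ℝ) * b₁ n j * b₂ n j * (W j ω - θ)| ∂μ := by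
          simp_rw [mul_sum, mul_assoc]
      _ ≤ ∑ j ∈ Icc 1 n, |1 / (n : ℝ) * b₁ n j * b₂ n j| * e j :=
          integral_abs_sum_mul_le _ _ fun j _ => (hint j).sub (integrable_const θ)
      _ ≤ _ := sum_le_sum fun j hj => by
          obtain ⟨hj, hjn⟩ := mem_Icc.1 hj
          exact mul_le_mul_of_nonneg_right (abs_mul_le_powerWeight (by omega)
            (hb₁ n j hj hjn) (hb₂ n j hj hjn)) (integral_nonneg fun _ => abs_nonneg _)
  have hweighted : Tendsto (fun n => ∑ j ∈ Icc 1 n, K ^ 2 * powerWeight (p₁ + p₂) n j * e j)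
      atTop (𝓝 0) :=
    tendsto_sum_mul_of_tendsto_zero (C := K ^ 2 * (3 ^ (1 - (p₁ + p₂)) / (1 - (p₁ + p₂))))
      (fun n j => mul_nonneg (sq_nonneg K) (powerWeight_nonneg _ n j))
      (fun n => by rw [← mul_sum]; gcongr; exact sum_powerWeight_le hp n)
      (fun j => by simpa using (tendsto_powerWeight_atTop hp j).const_mul (K ^ 2)) hconv
  exact squeeze_zero (fun n => integral_nonneg fun _ => abs_nonneg _) hbound hweighted

/-- If `W_j → θ` in `L¹` and the coefficients satisfy `|b⁽¹⁾_{j,n}| ≤ K (n/(j+1))^{p₁}`,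
`|b⁽²⁾_{j,n}| ≤ K (n/(j+1))^{p₂}` with `p₁ + p₂ < 1`, then
`E|(1/n) ∑_{j=1}^n b⁽¹⁾_{j,n} b⁽²⁾_{j,n} (W_j − θ)| → 0`. -/
theorem weighted_cesaro_L1_convergence
    {Ω : Type*} {m0 : MeasurableSpace Ω} (μ : Measure Ω) [IsProbabilityMeasure μ]
    (θ : ℝ) (W : ℕ → Ω → ℝ) (hint : ∀ j, Integrable (W j) μ)
    (hconv : Tendsto (fun j : ℕ => ∫ ω, |W j ω - θ| ∂μ) atTop (nhds 0))
    (p₁ p₂ : ℝ) (hp : p₁ + p₂ < 1) (K : ℝ) (hK : 0 < K)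
    (b₁ b₂ : ℕ → ℕ → ℝ)
    (hb₁ : ∀ n j : ℕ, 1 ≤ j → j ≤ n → |b₁ n j| ≤ K * ((n : ℝ) / ((j : ℝ) + 1)) ^ p₁)
    (hb₂ : ∀ n j : ℕ, 1 ≤ j → j ≤ n → |b₂ n j| ≤ K * ((n : ℝ) / ((j : ℝ) + 1)) ^ p₂) :
    Tendsto
      (fun n : ℕ =>
        ∫ ω, |(1 / (n : ℝ)) * ∑ j ∈ Finset.Icc 1 n, b₁ n j * b₂ n j * (W j ω - θ)| ∂μ)
      atTop (nhds 0) :=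
  weighted_cesaro_L1_convergence_general (m0 := m0) μ θ W hint hconv p₁ p₂ hp K b₁ b₂ hb₁ hb₂
end
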